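/- arXiv:2104.10358 — 2 statements merged into one kernel-verified Lean document; each statement's English description precedes it below -/
import Mathlib

section
/- Let ℳ be a finite automaton with cycle set C_ℳ and reachability preorder c ≤₀ d on C_ℳ (some state of d reachable from some state of c). If A ⊆ C_ℳ is ≤₀-upward-closed, then f_ℳ⁻¹(A) is an open subset of X^ω in the Cantor topology. -/
/-!
Every state of a run reaches the cycle of that run. Given `ξ` with `f_ℳ(ξ) ∈ A`, fix a
position `N` at which the run of `ξ` visits its cycle. Every word `η` sharing the prefix of
length `N` with `ξ` is in the same state at time `N`, from which its own cycle is reachable;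
so `f_ℳ(ξ) ≤₀ f_ℳ(η)` and `f_ℳ(η) ∈ A`. Thus `f_ℳ⁻¹(A)` contains a cylinder around each of
its points.
-/

/-- The run of an automaton on an infinite word. -/
def run {X Q : Type*} (δ : Q → X → Q) (init : Q) (ξ : ℕ → X) : ℕ → Q :=
  fun n => Nat.rec init (fun m q => δ q (ξ m)) n

/-- The set of states occurring infinitely often in the run on `ξ`. -/
def infOcc {X Q : Type*} (δ : Q → X → Q) (init : Q) (ξ : ℕ → X) : Set Q :=
  {q | ∀ N : ℕ, ∃ n : ℕ, N ≤ n ∧ run δ init ξ n = q}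

/-- The set of cycles of the automaton. -/
def cycles {X Q : Type*} (δ : Q → X → Q) (init : Q) : Set (Set Q) :=
  {c | ∃ ξ : ℕ → X, infOcc δ init ξ = c}

/-- Reachability of state `r` from state `q`. -/
def reach {X Q : Type*} (δ : Q → X → Q) (q r : Q) : Prop :=
  ∃ w : List X, w.foldl δ q = r

/-- `c ≤₀ d`: some state of `d` is reachable from some state of `c`. -/
def cle0 {X Q : Type*} (δ : Q → X → Q) (c d : Set Q) : Prop :=
  ∃ q ∈ c, ∃ r ∈ d, reach δ q r

open Filter

section Run

variable {X Q : Type*} (δ : Q → X → Q) (init : Q)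

lemma run_succ (ξ : ℕ → X) (n : ℕ) :
    run δ init ξ (n + 1) = δ (run δ init ξ n) (ξ n) := rfl

lemma mem_infOcc_iff_frequently {ξ : ℕ → X} {q : Q} :
    q ∈ infOcc δ init ξ ↔ ∃ᶠ n in atTop, run δ init ξ n = q :=
  frequently_atTop.symm

lemma infOcc_nonempty [Finite Q] (ξ : ℕ → X) : (infOcc δ init ξ).Nonempty := by
  obtain ⟨q, hq⟩ := Finite.exists_infinite_fiber (run δ init ξ)
  exact ⟨q, (mem_infOcc_iff_frequently δ init).2
    (Nat.frequently_atTop_iff_infinite.2 (Set.infinite_coe_iff.1 hq))⟩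

lemma run_eq_of_mem_cylinder {ξ η : ℕ → X} {N : ℕ} (h : η ∈ PiNat.cylinder ξ N) :
    ∀ n ≤ N, run δ init η n = run δ init ξ n
  | 0, _ => rfl
  | n + 1, hn => by
    rw [run_succ, run_succ, run_eq_of_mem_cylinder h n (by omega), h n (by omega)]

lemma reach_run_of_le (ξ : ℕ → X) {m n : ℕ} (hmn : m ≤ n) :
    reach δ (run δ init ξ m) (run δ init ξ n) := by
  induction n, hmn using Nat.le_induction with
  | base => exact ⟨[], rfl⟩
  | succ n _ ih =>
    obtain ⟨w, hw⟩ := ih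
    exact ⟨w ++ [ξ n], by rw [List.foldl_append, hw]; rfl⟩

lemma exists_mem_infOcc_reach_run [Finite Q] (ξ : ℕ → X) (N : ℕ) :
    ∃ r ∈ infOcc δ init ξ, reach δ (run δ init ξ N) r := by
  obtain ⟨r, hr⟩ := infOcc_nonempty δ init ξ
  obtain ⟨n, hNn, rfl⟩ := hr N
  exact ⟨_, hr, reach_run_of_le δ init ξ hNn⟩

lemma cle0_infOcc_of_mem_cylinder [Finite Q] {ξ η : ℕ → X} {N : ℕ}
    (hN : run δ init ξ N ∈ infOcc δ init ξ) (hη : η ∈ PiNat.cylinder ξ N) :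
    cle0 δ (infOcc δ init ξ) (infOcc δ init η) := by
  obtain ⟨r, hr, hreach⟩ := exists_mem_infOcc_reach_run δ init η N
  rw [run_eq_of_mem_cylinder δ init hη N le_rfl] at hreach
  exact ⟨_, hN, r, hr, hreach⟩

end Run

/-- If `A ⊆ C_ℳ` is `≤₀`-upward-closed, then `f_ℳ⁻¹(A)` is open in the Cantor
topology on `X^ω`. -/
theorem stmt16 {X Q : Type*} [Finite Q] [TopologicalSpace X] [DiscreteTopology X]
    (δ : Q → X → Q) (init : Q) (A : Set (Set Q))
    (hA : ∀ c ∈ cycles δ init, ∀ d ∈ cycles δ init, c ∈ A → cle0 δ c d → d ∈ A) :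
    IsOpen {ξ : ℕ → X | infOcc δ init ξ ∈ A} := by
  refine isOpen_iff_mem_nhds.2 fun ξ hξ => ?_
  obtain ⟨q, hq⟩ := infOcc_nonempty δ init ξ
  obtain ⟨N, -, hN⟩ := hq 0
  have hcyl := (PiNat.isOpen_cylinder _ ξ N).mem_nhds (PiNat.self_mem_cylinder ξ N)
  exact mem_of_superset hcyl fun η hη =>
    hA _ ⟨ξ, rfl⟩ _ ⟨η, rfl⟩ hξ (cle0_infOcc_of_mem_cylinder δ init (hN ▸ hq) hη)
end

section
/- Let ℳ be a finite automaton and A ⊆ C_ℳ not ≤₀-upward-closed (c ∈ A, c ≤₀ d, d ∉ A for some cycles c, d). Then the Π⁰₁-complete set {x ∈ {0,1}^ω : x contains no occurrence of 1} Lipschitz-reduces (reduces via a function g with g(ξ)(n) depending only on ξ↾(n+1), up to a constant shift realized by a synchronous continuous function) to f_ℳ⁻¹(A). -/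
/-!
Write `η` for a word with infinity set `c` and `ζ` for one with infinity set `d`. Since every
state of `c` recurs along the run on `η`, and some state of `c` reaches a state `r ∈ d`, the state
reached after any prefix `η↾k` can be steered by a finite word `w k` to `r`, and `r` occurs at some
time `m` along the run on `ζ`. The reduction copies `η` as long as it reads `0`s; once it sees the
first `1`, at position `k`, it switches to `η↾k · w k · (ζ shifted by m)`, whose infinity set is
`d`. Each output letter only depends on the input read so far, because the switched word still
agrees with `η` below `k`.
-/

section Automaton

variable {X Q : Type*} (δ : Q → X → Q)

theorem run_eq_foldl_take (q : Q) (ξ : Stream' X) (n : ℕ) :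
    run δ q ξ n = (Stream'.take n ξ).foldl δ q := by
  induction n with
  | zero => rfl
  | succ n ih =>
    rw [← Stream'.concat_take_get, List.foldl_concat, ← ih]
    rfl

theorem run_add (q : Q) (ξ : Stream' X) (m n : ℕ) :
    run δ q ξ (m + n) = run δ (run δ q ξ m) (Stream'.drop m ξ) n := by
  simp only [run_eq_foldl_take, Stream'.take_add, List.foldl_append]

theorem infOcc_drop (q : Q) (ξ : Stream' X) (m : ℕ) :
    infOcc δ q ξ = infOcc δ (run δ q ξ m) (Stream'.drop m ξ) := by
  ext x
  constructor
  · intro hx N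
    obtain ⟨n, hn, rfl⟩ := hx (m + N)
    obtain ⟨k, rfl⟩ := Nat.exists_eq_add_of_le hn
    exact ⟨N + k, Nat.le_add_right N k, by rw [add_assoc, run_add δ q ξ m]⟩
  · intro hx N
    obtain ⟨n, hn, rfl⟩ := hx N
    exact ⟨m + n, le_add_left hn, run_add δ q ξ m n⟩

theorem run_append_length (q : Q) (l : List X) (s : Stream' X) :
    run δ q (l ++ₛ s) l.length = l.foldl δ q := by
  rw [run_eq_foldl_take, Stream'.take_append_of_le_length _ _ _ le_rfl, List.take_length]

theorem infOcc_append (q : Q) (l : List X) (s : Stream' X) :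
    infOcc δ q (l ++ₛ s) = infOcc δ (l.foldl δ q) s := by
  rw [infOcc_drop δ q _ l.length, Stream'.drop_append_stream, run_append_length]

theorem reach_trans {p q r : Q} (hpq : reach δ p q) (hqr : reach δ q r) : reach δ p r := by
  obtain ⟨u, rfl⟩ := hpq
  obtain ⟨v, rfl⟩ := hqr
  exact ⟨u ++ v, List.foldl_append⟩

theorem reach_run_of_mem_infOcc {q x : Q} {ξ : Stream' X} (hx : x ∈ infOcc δ q ξ) (n : ℕ) :
    reach δ (run δ q ξ n) x := by
  obtain ⟨m, hm, rfl⟩ := hx n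
  obtain ⟨k, rfl⟩ := Nat.exists_eq_add_of_le hm
  exact ⟨Stream'.take k (Stream'.drop n ξ),
    by rw [run_add, run_eq_foldl_take δ _ (Stream'.drop n ξ)]⟩

end Automaton

theorem exists_ofFn_eq_of_prefix_determined {α β : Type*} [Inhabited α]
    (G : (ℕ → α) → ℕ → β) (hG : ∀ ξ η n, (∀ i ≤ n, ξ i = η i) → G ξ n = G η n) :
    ∃ φ : List α → β, ∀ ξ n, φ (List.ofFn fun i : Fin (n + 1) => ξ i) = G ξ n := by
  refine ⟨fun s => G (fun i => s.getD i default) (s.length - 1), fun ξ n => ?_⟩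
  simp only [List.length_ofFn, Nat.add_sub_cancel]
  refine hG _ _ n fun i hi => ?_
  simp [List.getD_eq_getElem?_getD, Nat.lt_succ_of_le hi, -List.ofFn_succ]

theorem exists_first_true {ξ : ℕ → Bool} (h : ∃ k, ξ k = true) :
    ∃ k, ξ k = true ∧ ∀ i < k, ξ i = false :=
  ⟨Nat.find h, Nat.find_spec h, fun _ hi => Bool.eq_false_iff.2 (Nat.find_min h hi)⟩

section Switch

variable {X : Type*} {V : ℕ → X} {W : ℕ → ℕ → X} {ξ η : ℕ → Bool} {k n : ℕ}

open Classical in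
noncomputable def switch (V : ℕ → X) (W : ℕ → ℕ → X) (ξ : ℕ → Bool) : ℕ → X :=
  if h : ∃ k, ξ k = true then W (Nat.find h) else V

theorem switch_of_forall_false (h : ∀ n, ξ n = false) : switch V W ξ = V := by
  rw [switch, dif_neg]
  simp [h]

theorem switch_of_first (hk : ξ k = true) (hlt : ∀ i < k, ξ i = false) :
    switch V W ξ = W k := by
  have h : ∃ k, ξ k = true := ⟨k, hk⟩
  rw [switch, dif_pos h, (Nat.find_eq_iff h).2 ⟨hk, fun i hi => by simp [hlt i hi]⟩]

theorem switch_apply_of_forall_le (hVW : ∀ k n, n < k → W k n = V n)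
    (h : ∀ i ≤ n, ξ i = false) : switch V W ξ n = V n := by
  by_cases hex : ∃ k, ξ k = true
  · obtain ⟨k, hk, hlt⟩ := exists_first_true hex
    rw [switch_of_first hk hlt, hVW k n]
    by_contra! hkn
    simp [h k hkn] at hk
  · rw [switch_of_forall_false (by simpa using hex)]

theorem switch_apply_congr (hVW : ∀ k n, n < k → W k n = V n)
    (h : ∀ i ≤ n, ξ i = η i) : switch V W ξ n = switch V W η n := by
  by_cases hex : ∃ k ≤ n, ξ k = true
  · obtain ⟨k, hk, hlt⟩ := exists_first_true (hex.imp fun _ => And.right)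
    have hkn : k ≤ n := by
      by_contra! hnk
      obtain ⟨j, hj, hjt⟩ := hex
      simp [hlt j (hj.trans_lt hnk)] at hjt
    rw [switch_of_first hk hlt, switch_of_first (ξ := η) (by rwa [← h k hkn])
      fun i hi => by rw [← h i (hi.le.trans hkn), hlt i hi]]
  · have hξ : ∀ i ≤ n, ξ i = false := fun i hi => by simpa using fun h => hex ⟨i, hi, h⟩
    rw [switch_apply_of_forall_le hVW hξ,
      switch_apply_of_forall_le hVW fun i hi => by rw [← h i hi, hξ i hi]]

end Switch

theorem stmt18_general {X Q : Type*} (δ : Q → X → Q) (init : Q)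
    (A : Set (Set Q)) (c d : Set Q)
    (hc : c ∈ cycles δ init) (hd : d ∈ cycles δ init)
    (hcA : c ∈ A) (hdA : d ∉ A) (hcd : cle0 δ c d) :
    ∃ φ : List Bool → X, ∀ ξ : ℕ → Bool,
      ((∀ n, ξ n = false) ↔
        infOcc δ init (fun n => φ (List.ofFn fun i : Fin (n + 1) => ξ i)) ∈ A) := by
  obtain ⟨η, rfl⟩ := hc
  obtain ⟨ζ, rfl⟩ := hd
  obtain ⟨q, hq, r, hr, hqr⟩ := hcd
  obtain ⟨m, -, hm⟩ := hr 0
  choose w hw using fun k => reach_trans δ (reach_run_of_mem_infOcc δ hq k) hqr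
  let W : ℕ → ℕ → X := fun k => Stream'.take k η ++ₛ (w k ++ₛ Stream'.drop m ζ)
  have hW : ∀ k, infOcc δ init (W k) = infOcc δ init ζ := fun k => by
    rw [infOcc_append, infOcc_append, ← run_eq_foldl_take δ init η k, hw, ← hm,
      ← infOcc_drop δ init ζ m]
  have hVW : ∀ k n, n < k → W k n = η n := fun k n hn =>
    (Stream'.get_append_left n _ _ (hn.trans_eq (Stream'.length_take k η).symm)).trans
      (Stream'.take_get _ _ _ _)
  obtain ⟨φ, hφ⟩ := exists_ofFn_eq_of_prefix_determined (switch η W)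
    fun _ _ _ => switch_apply_congr hVW
  refine ⟨φ, fun ξ => ?_⟩
  simp only [hφ]
  by_cases h : ∀ n, ξ n = false
  · simpa [h, switch_of_forall_false h] using hcA
  · obtain ⟨k, hk, hlt⟩ := exists_first_true (by simpa using h)
    rw [switch_of_first hk hlt, hW]
    exact iff_of_false (fun h' => by simp [h'] at hk) hdA

/-- If `A ⊆ C_ℳ` is not `≤₀`-upward-closed (witnessed by cycles `c ∈ A`, `c ≤₀ d`,
`d ∉ A`), then the Π⁰₁-complete set `{x ∈ 2^ω : x contains no 1}` reduces to
`f_ℳ⁻¹(A)` via a synchronous continuous (Lipschitz) function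
`g(ξ)(n) = φ(ξ↾(n+1))`. -/
theorem stmt18 {X Q : Type*} [Finite Q] (δ : Q → X → Q) (init : Q)
    (A : Set (Set Q)) (c d : Set Q)
    (hc : c ∈ cycles δ init) (hd : d ∈ cycles δ init)
    (hcA : c ∈ A) (hdA : d ∉ A) (hcd : cle0 δ c d) :
    ∃ φ : List Bool → X, ∀ ξ : ℕ → Bool,
      ((∀ n, ξ n = false) ↔
        infOcc δ init (fun n => φ (List.ofFn fun i : Fin (n + 1) => ξ i)) ∈ A) :=
  stmt18_general δ init A c d hc hd hcA hdA hcd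
end
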